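/- Under the setting of the sublinear-rate theorem for convex F — sequences x^{k+1} = x^k + α_k d^k with α_k ∈ (0,1], symmetric positive semidefinite H_k with ‖H_k‖ ≤ M, directions d^k satisfying Q_k(d^k) ≤ (1 − η)Q_k*, Armijo decrease F(x^{k+1}) ≤ F(x^k) + α_kγΔ_k at every iteration, and R₀ = sup{dist(x, Ω) : F(x) ≤ F(x⁰)} < ∞ — if additionally α_k ≥ ᾱ for some ᾱ > 0 and all k, then the first index k₀ with F(x^{k₀}) − F* < M R₀² satisfies k₀ ≤ max{0, 1 + (2/(γ(1 − η)ᾱ))·log((F(x⁰) − F*)/(M R₀²))}. -/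

import Mathlib

/-
Setting: minimize F = f + ψ over ℝⁿ (modeled as `EuclideanSpace ℝ (Fin n)`), where
f : ℝⁿ → ℝ is smooth and ψ : ℝⁿ → ℝ ∪ {+∞} (modeled as `EReal`-valued, never ⊥)
is convex, proper and closed.  The quadratic model at x with symmetric operator H is
Q(d) = ⟪∇f(x), d⟫ + (1/2)⟪H d, d⟫ + ψ(x+d) − ψ(x), and Δ(d) = ⟪∇f(x), d⟫ + ψ(x+d) − ψ(x).
-/

open scoped RealInnerProductSpace
open Set Filter Topology

noncomputable section

/-- Convexity for extended-real-valued functions (values in ℝ ∪ {±∞}). -/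
def ConvexE {n : ℕ} (g : EuclideanSpace ℝ (Fin n) → EReal) : Prop :=
  ∀ x y : EuclideanSpace ℝ (Fin n), ∀ a b : ℝ, 0 ≤ a → 0 ≤ b → a + b = 1 →
    g (a • x + b • y) ≤ (a : EReal) * g x + (b : EReal) * g y

/-- ψ is proper: it never takes the value −∞ (its values lie in ℝ ∪ {+∞})
and it is finite somewhere. -/
def ProperPsi {n : ℕ} (ψ : EuclideanSpace ℝ (Fin n) → EReal) : Prop :=
  (∀ x, ψ x ≠ ⊥) ∧ ∃ x, ψ x ≠ ⊤

/-- ψ is closed, i.e. lower semicontinuous. -/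
def ClosedPsi {n : ℕ} (ψ : EuclideanSpace ℝ (Fin n) → EReal) : Prop :=
  LowerSemicontinuous ψ

/-- H is a symmetric (self-adjoint) linear operator. -/
def SymmCLM {n : ℕ} (H : EuclideanSpace ℝ (Fin n) →L[ℝ] EuclideanSpace ℝ (Fin n)) : Prop :=
  ∀ u v, ⟪H u, v⟫ = ⟪u, H v⟫

/-- m is the smallest eigenvalue of the symmetric operator H
(characterized as the minimum of the Rayleigh quotient over the unit sphere). -/
def IsSmallestEigenvalue {n : ℕ} (H : EuclideanSpace ℝ (Fin n) →L[ℝ] EuclideanSpace ℝ (Fin n))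
    (m : ℝ) : Prop :=
  IsLeast {r : ℝ | ∃ u : EuclideanSpace ℝ (Fin n), ‖u‖ = 1 ∧ r = ⟪H u, u⟫} m

/-- The objective F = f + ψ (extended-real-valued). -/
def Fm {n : ℕ} (f : EuclideanSpace ℝ (Fin n) → ℝ) (ψ : EuclideanSpace ℝ (Fin n) → EReal)
    (x : EuclideanSpace ℝ (Fin n)) : EReal :=
  (f x : EReal) + ψ x

/-- The quadratic model Q(d) = ∇f(x)ᵀd + (1/2)dᵀHd + ψ(x+d) − ψ(x). -/
def Qm {n : ℕ} (f : EuclideanSpace ℝ (Fin n) → ℝ) (ψ : EuclideanSpace ℝ (Fin n) → EReal)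
    (H : EuclideanSpace ℝ (Fin n) →L[ℝ] EuclideanSpace ℝ (Fin n))
    (x d : EuclideanSpace ℝ (Fin n)) : EReal :=
  ((⟪gradient f x, d⟫ + 1 / 2 * ⟪H d, d⟫ : ℝ) : EReal) + ψ (x + d) - ψ x

/-- Δ(d) = ∇f(x)ᵀd + ψ(x+d) − ψ(x). -/
def Dm {n : ℕ} (f : EuclideanSpace ℝ (Fin n) → ℝ) (ψ : EuclideanSpace ℝ (Fin n) → EReal)
    (x d : EuclideanSpace ℝ (Fin n)) : EReal :=
  ((⟪gradient f x, d⟫ : ℝ) : EReal) + ψ (x + d) - ψ x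

/-- g is σ-strongly convex: g − (σ/2)‖·‖² is convex. -/
def StrongConvexE {n : ℕ} (σ : ℝ) (g : EuclideanSpace ℝ (Fin n) → EReal) : Prop :=
  ConvexE (fun d => g d - ((σ / 2 * ‖d‖ ^ 2 : ℝ) : EReal))

/-- The solution set Ω = argmin F. -/
def SolSet {n : ℕ} (f : EuclideanSpace ℝ (Fin n) → ℝ)
    (ψ : EuclideanSpace ℝ (Fin n) → EReal) : Set (EuclideanSpace ℝ (Fin n)) :=
  {y | ∀ z, Fm f ψ y ≤ Fm f ψ z}

/-! Each accepted step decreases `F` by at least `α γ (1 - η)` times the optimal model decrease,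
and comparing the model with its value at a near-closest solution (convexity of `f`, `‖H‖ ≤ M`)
shows `inf Q ≤ F* - F(x) + (M/2) R₀²`. Hence, as long as the gap `F(xᵏ) - F*` is at least
`M R₀²`, it contracts by the factor `1 - γ (1 - η) ᾱ / 2 ≤ exp (-γ (1 - η) ᾱ / 2)`; taking
logarithms bounds the number of such steps. -/

theorem ConvexOn.fderiv_sub_le {E : Type*} [NormedAddCommGroup E] [NormedSpace ℝ E]
    {f : E → ℝ} {x : E} (hfc : ConvexOn ℝ univ f) (hf : DifferentiableAt ℝ f x) (y : E) :
    fderiv ℝ f x (y - x) ≤ f y - f x := by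
  have hconv : ConvexOn ℝ univ (f ∘ (AffineMap.lineMap x y : ℝ →ᵃ[ℝ] E)) := by
    simpa using hfc.comp_affineMap (AffineMap.lineMap x y : ℝ →ᵃ[ℝ] E)
  have hderiv :
      HasDerivAt (f ∘ (AffineMap.lineMap x y : ℝ →ᵃ[ℝ] E)) (fderiv ℝ f x (y - x)) 0 := by
    refine HasFDerivAt.comp_hasDerivAt (0 : ℝ) ?_ AffineMap.hasDerivAt_lineMap
    simpa using hf.hasFDerivAt
  simpa [slope] using hconv.le_slope_of_hasDerivAt (mem_univ 0) (mem_univ 1) zero_lt_one hderiv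

theorem ConvexOn.inner_gradient_sub_le {E : Type*} [NormedAddCommGroup E]
    [InnerProductSpace ℝ E] [CompleteSpace E] {f : E → ℝ} {x : E}
    (hfc : ConvexOn ℝ univ f) (hf : DifferentiableAt ℝ f x) (y : E) :
    ⟪gradient f x, y - x⟫ ≤ f y - f x := by
  have h := hfc.fderiv_sub_le hf y
  rwa [← toDual_gradient, InnerProductSpace.toDual_apply_apply] at h

theorem EReal.eq_coe_sub_of_coe_add_eq {a c : ℝ} {b : EReal} (h : (a : EReal) + b = c) :
    b = ((c - a : ℝ) : EReal) := by
  induction b using EReal.rec with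
  | bot => simp at h
  | coe b =>
    rw [← EReal.coe_add, EReal.coe_eq_coe_iff] at h
    rw [EReal.coe_eq_coe_iff]; linarith
  | top => simp at h

theorem EReal.exists_coe_eq_of_coe_le_of_le_coe {a : EReal} {l u : ℝ} (hl : (l : EReal) ≤ a)
    (hu : a ≤ u) : ∃ c : ℝ, a = c := by
  induction a using EReal.rec with
  | bot => simp at hl
  | coe c => exact ⟨c, rfl⟩
  | top => simp at hu

theorem EReal.exists_antitone_coe_eq {u : ℕ → EReal} {l c₀ : ℝ} (hl : ∀ k, (l : EReal) ≤ u k)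
    (h0 : u 0 = c₀) (hstep : ∀ k (c : ℝ), u k = c → u (k + 1) ≤ c) :
    ∃ φ : ℕ → ℝ, (∀ k, u k = φ k) ∧ Antitone φ := by
  have hfinite : ∀ k, ∃ c : ℝ, u k = c := by
    intro k
    induction k with
    | zero => exact ⟨c₀, h0⟩
    | succ k ih =>
      obtain ⟨c, hc⟩ := ih
      exact EReal.exists_coe_eq_of_coe_le_of_le_coe (hl _) (hstep k c hc)
  choose φ hφ using hfinite
  refine ⟨φ, hφ, antitone_nat_of_succ_le fun k => ?_⟩
  have h := hstep k (φ k) (hφ k)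
  rwa [hφ, EReal.coe_le_coe_iff] at h

theorem le_one_sub_half_mul_of_le_add_mul {a a' m t t₀ : ℝ} (h : a' ≤ a + t * (m / 2 - a))
    (hm : m ≤ a) (ha : 0 ≤ a) (ht₀ : 0 ≤ t₀) (ht : t₀ ≤ t) : a' ≤ (1 - t₀ / 2) * a := by
  nlinarith [mul_le_mul_of_nonneg_right ht ha, mul_le_mul_of_nonneg_left hm (ht₀.trans ht)]

theorem le_exp_neg_mul_of_contraction {e : ℕ → ℝ} {P : ℝ} {j : ℕ}
    (hnonneg : ∀ i < j, 0 ≤ e i) (hcontr : ∀ i < j, e (i + 1) ≤ (1 - P) * e i) :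
    e j ≤ Real.exp (-(P * j)) * e 0 := by
  induction j with
  | zero => simp
  | succ j ih =>
    have hj := ih (fun i hi => hnonneg i (by omega)) (fun i hi => hcontr i (by omega))
    calc e (j + 1) ≤ (1 - P) * e j := hcontr j (by omega)
      _ ≤ Real.exp (-P) * e j :=
        mul_le_mul_of_nonneg_right (Real.one_sub_le_exp_neg P) (hnonneg j (by omega))
      _ ≤ Real.exp (-P) * (Real.exp (-(P * j)) * e 0) := by gcongr
      _ = Real.exp (-(P * ↑(j + 1))) * e 0 := by
        rw [← mul_assoc, ← Real.exp_add]; push_cast; ring_nf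

theorem cast_le_max_of_isLeast_lt {e : ℕ → ℝ} {m P : ℝ} {k₀ : ℕ} (hP : 0 < P)
    (hnonneg : ∀ i, 0 ≤ e i) (hcontr : ∀ i, m ≤ e i → e (i + 1) ≤ (1 - P) * e i)
    (hk₀ : IsLeast {k | e k < m} k₀) :
    (k₀ : ℝ) ≤ max 0 (1 + P⁻¹ * Real.log (e 0 / m)) := by
  obtain _ | j := k₀
  · simp
  have hbig : ∀ i < j + 1, m ≤ e i := fun i hi => not_lt.1 fun h => (hk₀.2 h).not_gt hi
  have hm : 0 < m := (hnonneg _).trans_lt hk₀.1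
  have hdecay : e j ≤ Real.exp (-(P * j)) * e 0 :=
    le_exp_neg_mul_of_contraction (fun i _ => hnonneg i) fun i hi => hcontr i (hbig i (by omega))
  have hlog : P * j ≤ Real.log (e 0 / m) := by
    rw [Real.le_log_iff_exp_le (div_pos (hm.trans_le (hbig 0 (by omega))) hm), le_div_iff₀ hm]
    calc Real.exp (P * j) * m ≤ Real.exp (P * j) * (Real.exp (-(P * j)) * e 0) := by
          gcongr; exact (hbig j (by omega)).trans hdecay
      _ = e 0 := by rw [← mul_assoc, ← Real.exp_add]; simp
  refine le_max_of_le_right ?_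
  push_cast
  rw [add_comm]
  gcongr
  rwa [le_inv_mul_iff₀ hP]

section QuadraticModel

variable {n : ℕ} {f : EuclideanSpace ℝ (Fin n) → ℝ} {ψ : EuclideanSpace ℝ (Fin n) → EReal}
  {H : EuclideanSpace ℝ (Fin n) →L[ℝ] EuclideanSpace ℝ (Fin n)} {x d : EuclideanSpace ℝ (Fin n)}

theorem Dm_le_Qm (hH : 0 ≤ ⟪H d, d⟫) : Dm f ψ x d ≤ Qm f ψ H x d := by
  refine EReal.sub_le_sub (add_le_add_left ?_ _) le_rfl
  exact EReal.coe_le_coe_iff.2 (by linarith)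

theorem Qm_zero_of_Fm_eq {c : ℝ} (hx : Fm f ψ x = c) : Qm f ψ H x 0 = 0 := by
  rw [Qm, add_zero, EReal.eq_coe_sub_of_coe_add_eq hx, ← EReal.coe_add, ← EReal.coe_sub]
  simp

theorem Qm_sub_le {M c Fstar : ℝ} {y : EuclideanSpace ℝ (Fin n)} (hfc : ConvexOn ℝ univ f)
    (hf : DifferentiableAt ℝ f x) (hHM : ‖H‖ ≤ M) (hx : Fm f ψ x = c) (hy : Fm f ψ y = Fstar) :
    Qm f ψ H x (y - x) ≤ ((Fstar - c + M / 2 * ‖y - x‖ ^ 2 : ℝ) : EReal) := by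
  have hgrad := hfc.inner_gradient_sub_le hf y
  have hH : ⟪H (y - x), y - x⟫ ≤ M * ‖y - x‖ ^ 2 := calc
    _ ≤ ‖H (y - x)‖ * ‖y - x‖ := real_inner_le_norm _ _
    _ ≤ ‖H‖ * ‖y - x‖ * ‖y - x‖ := by gcongr; exact H.le_opNorm _
    _ ≤ M * ‖y - x‖ ^ 2 := by rw [mul_assoc, ← sq]; gcongr
  rw [Qm, add_sub_cancel, EReal.eq_coe_sub_of_coe_add_eq hy, EReal.eq_coe_sub_of_coe_add_eq hx,
    ← EReal.coe_add, ← EReal.coe_sub, EReal.coe_le_coe_iff]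
  linarith

theorem iInf_Qm_le_of_infDist_le {M c Fstar R : ℝ} (hfc : ConvexOn ℝ univ f)
    (hf : DifferentiableAt ℝ f x) (hHM : ‖H‖ ≤ M) (hx : Fm f ψ x = c)
    (hΩ : (SolSet f ψ).Nonempty) (hFstar : ∀ y ∈ SolSet f ψ, Fm f ψ y = Fstar)
    (hR : Metric.infDist x (SolSet f ψ) ≤ R) :
    ⨅ e, Qm f ψ H x e ≤ ((Fstar - c + M / 2 * R ^ 2 : ℝ) : EReal) := by
  -- The distance to `SolSet f ψ` need not be attained, so `R` is approached from above.
  have hM : 0 ≤ M := (norm_nonneg H).trans hHM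
  have hε : ∀ ε > 0, ⨅ e, Qm f ψ H x e ≤ ((Fstar - c + M / 2 * (R + ε) ^ 2 : ℝ) : EReal) := by
    intro ε hε
    obtain ⟨y, hy, hxy⟩ := (Metric.infDist_lt_iff hΩ).1 (show _ < R + ε by linarith)
    refine (iInf_le _ (y - x)).trans ((Qm_sub_le hfc hf hHM hx (hFstar y hy)).trans ?_)
    rw [EReal.coe_le_coe_iff, ← dist_eq_norm, dist_comm]
    gcongr
  have hlim : Tendsto (fun ε : ℝ => ((Fstar - c + M / 2 * (R + ε) ^ 2 : ℝ) : EReal)) (𝓝[>] 0)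
      (𝓝 ((Fstar - c + M / 2 * R ^ 2 : ℝ) : EReal)) := by
    have hcont : Continuous fun ε : ℝ => ((Fstar - c + M / 2 * (R + ε) ^ 2 : ℝ) : EReal) :=
      continuous_coe_real_ereal.comp (by fun_prop)
    simpa using hcont.continuousWithinAt.tendsto (s := Ioi 0) (x := 0)
  exact ge_of_tendsto hlim (eventually_nhdsWithin_of_forall hε)

theorem Fm_le_of_armijo {x' : EuclideanSpace ℝ (Fin n)} {α γ η c b : ℝ} (hαγ : 0 ≤ α * γ)
    (hη : η ≤ 1) (hH : 0 ≤ ⟪H d, d⟫)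
    (happrox : Qm f ψ H x d ≤ ((1 - η : ℝ) : EReal) * ⨅ e, Qm f ψ H x e)
    (harmijo : Fm f ψ x' ≤ Fm f ψ x + ((α * γ : ℝ) : EReal) * Dm f ψ x d)
    (hx : Fm f ψ x = c) (hb : ⨅ e, Qm f ψ H x e ≤ b) :
    Fm f ψ x' ≤ ((c + α * γ * ((1 - η) * b) : ℝ) : EReal) := by
  have hD : Dm f ψ x d ≤ (((1 - η) * b : ℝ) : EReal) := calc
    Dm f ψ x d ≤ Qm f ψ H x d := Dm_le_Qm hH
    _ ≤ ((1 - η : ℝ) : EReal) * ⨅ e, Qm f ψ H x e := happrox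
    _ ≤ ((1 - η : ℝ) : EReal) * b :=
      mul_le_mul_of_nonneg_left hb (EReal.coe_nonneg.2 (by linarith))
    _ = _ := (EReal.coe_mul _ _).symm
  calc Fm f ψ x' ≤ c + ((α * γ : ℝ) : EReal) * Dm f ψ x d := hx ▸ harmijo
    _ ≤ c + ((α * γ : ℝ) : EReal) * (((1 - η) * b : ℝ) : EReal) :=
      add_le_add_right (mul_le_mul_of_nonneg_left hD (EReal.coe_nonneg.2 hαγ)) _
    _ = _ := by norm_cast

end QuadraticModel

theorem bound_on_first_index_general {n : ℕ}
    (f : EuclideanSpace ℝ (Fin n) → ℝ) (ψ : EuclideanSpace ℝ (Fin n) → EReal)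
    (L M γ η R₀ Fstar F0 abar : ℝ)
    (xseq dseq : ℕ → EuclideanSpace ℝ (Fin n)) (α : ℕ → ℝ)
    (H : ℕ → (EuclideanSpace ℝ (Fin n) →L[ℝ] EuclideanSpace ℝ (Fin n)))
    (hf : Differentiable ℝ f) (hfconv : ConvexOn ℝ Set.univ f)
    (hΩ : (SolSet f ψ).Nonempty)
    (hFstar : ∀ y ∈ SolSet f ψ, Fm f ψ y = (Fstar : EReal))
    (hγ0 : 0 < γ) (hη1 : η < 1)
    (hR0 : IsLUB {r : ℝ | ∃ y, Fm f ψ y ≤ Fm f ψ (xseq 0) ∧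
        r = Metric.infDist y (SolSet f ψ)} R₀)
    (hHpsd : ∀ k, ∀ e : EuclideanSpace ℝ (Fin n), 0 ≤ ⟪(H k) e, e⟫)
    (hHM : ∀ k, ‖H k‖ ≤ M)
    (happrox : ∀ k, Qm f ψ (H k) (xseq k) (dseq k) ≤
        ((1 - η : ℝ) : EReal) * ⨅ e, Qm f ψ (H k) (xseq k) e)
    (harmijo : ∀ k, Fm f ψ (xseq (k + 1)) ≤
        Fm f ψ (xseq k) + ((α k * γ : ℝ) : EReal) * Dm f ψ (xseq k) (dseq k))
    (habar : 0 < abar) (hαlb : ∀ k, abar ≤ α k)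
    (hF0 : Fm f ψ (xseq 0) = (F0 : EReal))
    (k₀ : ℕ)
    (hk₀ : IsLeast {k : ℕ |
        Fm f ψ (xseq k) - (Fstar : EReal) < ((M * R₀ ^ 2 : ℝ) : EReal)} k₀) :
    (k₀ : ℝ) ≤
      max 0 (1 + 2 / (γ * (1 - η) * abar) * Real.log ((F0 - Fstar) / (M * R₀ ^ 2))) := by
  have hFstar_le : ∀ z, (Fstar : EReal) ≤ Fm f ψ z := fun z =>
    hFstar _ hΩ.some_mem ▸ hΩ.some_mem z
  have hdescent : ∀ k (c b : ℝ), Fm f ψ (xseq k) = c → ⨅ e, Qm f ψ (H k) (xseq k) e ≤ b →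
      Fm f ψ (xseq (k + 1)) ≤ ((c + α k * γ * ((1 - η) * b) : ℝ) : EReal) := fun k c b hc hb =>
    Fm_le_of_armijo (mul_nonneg (habar.trans_le (hαlb k)).le hγ0.le) hη1.le (hHpsd k _)
      (happrox k) (harmijo k) hc hb
  obtain ⟨φ, hφ, hanti⟩ :=
    EReal.exists_antitone_coe_eq (fun k => hFstar_le (xseq k)) hF0 fun k c hc => by
      simpa using hdescent k c 0 hc ((iInf_le _ 0).trans (Qm_zero_of_Fm_eq hc).le)
  have hgap : ∀ k, 0 ≤ φ k - Fstar := fun k =>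
    sub_nonneg.2 (by exact_mod_cast hφ k ▸ hFstar_le (xseq k))
  have hη : 0 < 1 - η := sub_pos.2 hη1
  have hcontr : ∀ k, M * R₀ ^ 2 ≤ φ k - Fstar →
      φ (k + 1) - Fstar ≤ (1 - γ * (1 - η) * abar / 2) * (φ k - Fstar) := by
    intro k hk
    have hR : Metric.infDist (xseq k) (SolSet f ψ) ≤ R₀ :=
      hR0.1 ⟨xseq k, by rw [hφ, hφ 0]; exact_mod_cast hanti (Nat.zero_le k), rfl⟩
    have h := hdescent k _ _ (hφ k)
      (iInf_Qm_le_of_infDist_le hfconv (hf _) (hHM k) (hφ k) hΩ hFstar hR)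
    rw [hφ, EReal.coe_le_coe_iff] at h
    refine le_one_sub_half_mul_of_le_add_mul (t := α k * γ * (1 - η)) (by linarith) hk (hgap k)
      (by positivity) ?_
    rw [mul_right_comm _ _ abar, mul_comm _ abar]
    gcongr
    exact hαlb k
  have hk : IsLeast {k | φ k - Fstar < M * R₀ ^ 2} k₀ := by
    simpa only [hφ, ← EReal.coe_sub, EReal.coe_lt_coe_iff] using hk₀
  have hφ0 : φ 0 = F0 := EReal.coe_injective ((hφ 0).symm.trans hF0)
  simpa [inv_div, hφ0] using cast_le_max_of_isLeast_lt (by positivity) hgap hcontr hk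

/-- In the setting of the sublinear-rate theorem for convex F, if in
addition α_k ≥ ᾱ > 0 for all k, then the first index k₀ with F(x^{k₀}) − F* < M R₀²
satisfies k₀ ≤ max{0, 1 + (2/(γ(1 − η)ᾱ))·log((F(x⁰) − F*)/(M R₀²))}. -/
theorem bound_on_first_index {n : ℕ}
    (f : EuclideanSpace ℝ (Fin n) → ℝ) (ψ : EuclideanSpace ℝ (Fin n) → EReal)
    (L M γ η R₀ Fstar F0 abar : ℝ)
    (xseq dseq : ℕ → EuclideanSpace ℝ (Fin n)) (α : ℕ → ℝ)
    (H : ℕ → (EuclideanSpace ℝ (Fin n) →L[ℝ] EuclideanSpace ℝ (Fin n)))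
    (hf : Differentiable ℝ f) (hfconv : ConvexOn ℝ Set.univ f)
    (hL : 0 < L) (hlip : ∀ y z, ‖gradient f y - gradient f z‖ ≤ L * ‖y - z‖)
    (hψconv : ConvexE ψ) (hψproper : ProperPsi ψ) (hψclosed : ClosedPsi ψ)
    (hΩ : (SolSet f ψ).Nonempty)
    (hFstar : ∀ y ∈ SolSet f ψ, Fm f ψ y = (Fstar : EReal))
    (hM : 0 < M) (hγ0 : 0 < γ) (hγ1 : γ < 1) (hη0 : 0 ≤ η) (hη1 : η < 1)
    (hR0 : IsLUB {r : ℝ | ∃ y, Fm f ψ y ≤ Fm f ψ (xseq 0) ∧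
        r = Metric.infDist y (SolSet f ψ)} R₀)
    (hstep : ∀ k, xseq (k + 1) = xseq k + α k • dseq k)
    (hα : ∀ k, α k ∈ Set.Ioc (0 : ℝ) 1)
    (hHsymm : ∀ k, SymmCLM (H k))
    (hHpsd : ∀ k, ∀ e : EuclideanSpace ℝ (Fin n), 0 ≤ ⟪(H k) e, e⟫)
    (hHM : ∀ k, ‖H k‖ ≤ M)
    (happrox : ∀ k, Qm f ψ (H k) (xseq k) (dseq k) ≤
        ((1 - η : ℝ) : EReal) * ⨅ e, Qm f ψ (H k) (xseq k) e)
    (harmijo : ∀ k, Fm f ψ (xseq (k + 1)) ≤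
        Fm f ψ (xseq k) + ((α k * γ : ℝ) : EReal) * Dm f ψ (xseq k) (dseq k))
    (habar : 0 < abar) (hαlb : ∀ k, abar ≤ α k)
    (hF0 : Fm f ψ (xseq 0) = (F0 : EReal))
    (k₀ : ℕ)
    (hk₀ : IsLeast {k : ℕ |
        Fm f ψ (xseq k) - (Fstar : EReal) < ((M * R₀ ^ 2 : ℝ) : EReal)} k₀) :
    (k₀ : ℝ) ≤
      max 0 (1 + 2 / (γ * (1 - η) * abar) * Real.log ((F0 - Fstar) / (M * R₀ ^ 2))) :=
  bound_on_first_index_general f ψ L M γ η R₀ Fstar F0 abar xseq dseq α H hf hfconv hΩ hFstar hγ0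
    hη1 hR0 hHpsd hHM happrox harmijo habar hαlb hF0 k₀ hk₀
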